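/- Let G = G₁ × ⋯ × Gₙ be a direct product of finitely many groups. Then r(G) = r(G₁) + ⋯ + r(Gₙ) and rank(G) = rank(G₁) + ⋯ + rank(Gₙ), with the convention that a sum involving ∞ equals ∞. -/

import Mathlib

/-!
The centralizer of `x` in `∏ G j` is `∏ C(x j)`, and a finite-index free abelian subgroup `H`
of a product contains the product of its intersections with the factors, which are free abelian
of finite index with ranks adding up to at most `rank H`. Hence `x ∈ A_k(∏ G j)` iff
`x j ∈ A_{c j}(G j)` for some `c` with `∑ c ≤ k`, and covering each factor gives
`r(∏ G j) ≤ ∑ r(G j)`. Conversely a finite cover of the product by translates of `A_k` is a cover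
by boxes `∏ g j • A_{c j}(G j)` with `∑ c ≤ k`. Choose `y` in the first factor outside every
translate of level `< r(G 1)`: the boxes meeting the slice `x 1 = y` have `c 1 ≥ r(G 1)` and cover
the remaining factors, so induction on the factors gives `∑ r(G j) ≤ k`.
For the algebraic rank, `r` can only grow on passing to a finite-index subgroup, and every
finite-index subgroup of the product contains a product of finite-index subgroups of the factors.
-/

open scoped Pointwise

/-- `algA G i` is the set of elements of `G` whose centralizer contains a
free abelian subgroup of rank at most `i` as a subgroup of finite index. -/
def algA (G : Type*) [Group G] (i : ℕ) : Set G :=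
  {g : G | ∃ H : Subgroup (Subgroup.centralizer ({g} : Set G)),
    H.FiniteIndex ∧ ∃ n : ℕ, n ≤ i ∧ Nonempty (H ≃* Multiplicative (Fin n → ℤ))}

/-- `G` is covered by finitely many left translates of `algA G i`. -/
def algCovers (G : Type*) [Group G] (i : ℕ) : Prop :=
  ∃ F : Finset G, (⋃ g ∈ F, g • algA G i) = Set.univ

/-- `r(G)`: the least `i` such that `G` is a finite union of translates of `algA G i`
(`⊤` if there is no such `i`). -/
noncomputable def algr (G : Type*) [Group G] : ℕ∞ :=
  sInf {n : ℕ∞ | ∃ i : ℕ, n = (i : ℕ∞) ∧ algCovers G i}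

/-- The algebraic rank of `G`: the supremum of `r(G*)` over all finite index
subgroups `G*` of `G`. -/
noncomputable def algRank (G : Type*) [Group G] : ℕ∞ :=
  ⨆ (H : Subgroup G) (_ : H.FiniteIndex), algr H

noncomputable def piFreeAbelianEquiv {ι : Type*} [Fintype ι] (c : ι → ℕ) :
    (∀ j, Multiplicative (Fin (c j) → ℤ)) ≃* Multiplicative (Fin (∑ j, c j) → ℤ) :=
  (MulEquiv.piMultiplicative _).symm.trans <| AddEquiv.toMultiplicative <|
    ((LinearEquiv.piCurry ℤ fun _ _ => ℤ).symm.trans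
      (LinearEquiv.funCongrLeft ℤ ℤ (Fintype.equivFinOfCardEq (by simp)).symm)).toAddEquiv

lemma le_of_injective_freeAbelian {a b : ℕ}
    (f : Multiplicative (Fin a → ℤ) →* Multiplicative (Fin b → ℤ))
    (hf : Function.Injective f) : a ≤ b := by
  simpa using LinearMap.finrank_le_finrank_of_injective
    (f := (AddMonoidHom.toMultiplicative.symm f).toIntLinearMap) hf

lemma Subgroup.exists_mulEquiv_freeAbelian {m : ℕ} (N : Subgroup (Multiplicative (Fin m → ℤ))) :
    ∃ r : ℕ, Nonempty (N ≃* Multiplicative (Fin r → ℤ)) := by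
  let S : Submodule ℤ (Fin m → ℤ) := AddSubgroup.toIntSubmodule N.toAddSubgroup'
  obtain ⟨r, b⟩ := Submodule.basisOfPid (Pi.basisFun ℤ (Fin m)) S
  let e : N ≃* Multiplicative S :=
    { toFun x := Multiplicative.ofAdd ⟨x.1.toAdd, x.2⟩
      invFun y := ⟨Multiplicative.ofAdd (y.toAdd : Fin m → ℤ), y.toAdd.2⟩
      left_inv _ := rfl
      right_inv _ := rfl
      map_mul' _ _ := rfl }
  exact ⟨r, ⟨e.trans (AddEquiv.toMultiplicative b.equivFun.toAddEquiv)⟩⟩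

namespace Subgroup

variable {ι : Type*} {G : ι → Type*} [∀ j, Group (G j)]

def piEquivPi (K : ∀ j, Subgroup (G j)) : pi Set.univ K ≃* ∀ j, K j where
  toFun x j := ⟨x.1 j, x.2 j (Set.mem_univ j)⟩
  invFun y := ⟨fun j => y j, fun j _ => (y j).2⟩
  left_inv _ := rfl
  right_inv _ := rfl
  map_mul' _ _ := rfl

instance finiteIndex_pi [Finite ι] (K : ∀ j, Subgroup (G j)) [∀ j, (K j).FiniteIndex] :
    (pi Set.univ K).FiniteIndex := by
  have hK : pi Set.univ K = ⨅ j, (K j).comap (Pi.evalMonoidHom G j) := by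
    ext x
    simp [mem_pi, mem_iInf]
  have hfi : ∀ j, ((K j).comap (Pi.evalMonoidHom G j)).FiniteIndex := fun j =>
    ⟨by
      rw [index_comap_of_surjective _ (Function.surjective_eval j)]
      exact FiniteIndex.index_ne_zero⟩
  rw [hK]
  exact finiteIndex_iInf hfi

lemma centralizer_singleton_pi (x : ∀ j, G j) :
    centralizer {x} = pi Set.univ fun j => centralizer {x j} := by
  ext y
  simp only [mem_centralizer_singleton_iff, mem_pi, Set.mem_univ, forall_const, funext_iff,
    Pi.mul_apply]

end Subgroup

lemma Subgroup.finiteIndex_comap {G G' : Type*} [Group G] [Group G'] (H : Subgroup G)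
    [H.FiniteIndex] (f : G' →* G) : (H.comap f).FiniteIndex :=
  ⟨by
    rw [index_comap]
    exact isFiniteRelIndex_iff_relIndex_ne_zero.1 isFiniteRelIndex_of_finiteIndex⟩

def Subgroup.centralizerEquivSubgroupOf {G : Type*} [Group G] (K : Subgroup G) (x : K) :
    Subgroup.centralizer ({x} : Set K) ≃* K.subgroupOf (Subgroup.centralizer {(x : G)}) where
  toFun y := ⟨⟨y.1, Subgroup.mem_centralizer_singleton_iff.2
    (congrArg Subtype.val (Subgroup.mem_centralizer_singleton_iff.1 y.2))⟩, y.1.2⟩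
  invFun z := ⟨⟨z.1, z.2⟩, Subgroup.mem_centralizer_singleton_iff.2
    (Subtype.ext (Subgroup.mem_centralizer_singleton_iff.1 z.1.2))⟩
  left_inv _ := rfl
  right_inv _ := rfl
  map_mul' _ _ := rfl

def VirtuallyFreeAbelianOfRankLE (C : Type*) [Group C] (i : ℕ) : Prop :=
  ∃ H : Subgroup C, H.FiniteIndex ∧ ∃ n : ℕ, n ≤ i ∧ Nonempty (H ≃* Multiplicative (Fin n → ℤ))

namespace VirtuallyFreeAbelianOfRankLE

variable {C C' : Type*} [Group C] [Group C'] {i j : ℕ}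

lemma mono (hij : i ≤ j) : VirtuallyFreeAbelianOfRankLE C i → VirtuallyFreeAbelianOfRankLE C j :=
  fun ⟨H, hH, n, hn, hφ⟩ => ⟨H, hH, n, hn.trans hij, hφ⟩

lemma of_mulEquiv (e : C ≃* C') :
    VirtuallyFreeAbelianOfRankLE C i → VirtuallyFreeAbelianOfRankLE C' i :=
  fun ⟨H, hH, n, hn, ⟨φ⟩⟩ =>
    ⟨H.map (e : C →* C'), ⟨by rw [Subgroup.index_map_equiv]; exact hH.index_ne_zero⟩, n, hn,
      ⟨(e.subgroupMap H).symm.trans φ⟩⟩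

lemma of_finiteIndex (L : Subgroup C) [L.FiniteIndex] :
    VirtuallyFreeAbelianOfRankLE L i → VirtuallyFreeAbelianOfRankLE C i :=
  fun ⟨H, hH, n, hn, ⟨φ⟩⟩ =>
    ⟨H.map L.subtype,
      ⟨by
        rw [Subgroup.index_map_subtype]
        exact mul_ne_zero hH.index_ne_zero Subgroup.FiniteIndex.index_ne_zero⟩,
      n, hn, ⟨(H.equivMapOfInjective L.subtype L.subtype_injective).symm.trans φ⟩⟩

variable {ι : Type*} [Fintype ι] {C : ι → Type*} [∀ j, Group (C j)]

lemma pi {c : ι → ℕ} (h : ∀ j, VirtuallyFreeAbelianOfRankLE (C j) (c j)) :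
    VirtuallyFreeAbelianOfRankLE (∀ j, C j) (∑ j, c j) := by
  choose H hH r hr φ using h
  exact ⟨Subgroup.pi Set.univ H, inferInstance, ∑ j, r j, Finset.sum_le_sum fun j _ => hr j,
    ⟨((Subgroup.piEquivPi H).trans (MulEquiv.piCongrRight fun j => (φ j).some)).trans
      (piFreeAbelianEquiv r)⟩⟩

lemma exists_of_pi [DecidableEq ι] {k : ℕ}
    (h : VirtuallyFreeAbelianOfRankLE (∀ j, C j) k) :
    ∃ c : ι → ℕ, ∑ j, c j ≤ k ∧ ∀ j, VirtuallyFreeAbelianOfRankLE (C j) (c j) := by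
  obtain ⟨H, hH, m, hm, ⟨φ⟩⟩ := h
  let D j : Subgroup (C j) := H.comap (MonoidHom.mulSingle C j)
  have hDH : Subgroup.pi Set.univ D ≤ H :=
    Subgroup.pi_le_iff.2 fun j => Subgroup.map_comap_le _ _
  -- each factor `D j` embeds in `H`, hence is free abelian
  have hfree j : ∃ r, Nonempty (D j ≃* Multiplicative (Fin r → ℤ)) := by
    let ψ : D j →* H := ((MonoidHom.mulSingle C j).comp (D j).subtype).codRestrict H fun y => y.2
    have hψ : Function.Injective ψ := fun a b hab =>
      Subtype.ext (Pi.mulSingle_injective j (congrArg Subtype.val hab))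
    obtain ⟨r, ⟨e⟩⟩ := (φ.toMonoidHom.comp ψ).range.exists_mulEquiv_freeAbelian
    exact ⟨r, ⟨(MonoidHom.ofInjective (φ.injective.comp hψ)).trans e⟩⟩
  choose r e using hfree
  -- while their product embeds in `H`, which bounds the total rank
  have hr : ∑ j, r j ≤ m := by
    let ε : Multiplicative (Fin (∑ j, r j) → ℤ) ≃* Subgroup.pi Set.univ D :=
      (piFreeAbelianEquiv r).symm.trans
        ((MulEquiv.piCongrRight fun j => (e j).some.symm).trans (Subgroup.piEquivPi D).symm)
    exact le_of_injective_freeAbelian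
      (φ.toMonoidHom.comp ((Subgroup.inclusion hDH).comp ε.toMonoidHom))
      (φ.injective.comp ((Subgroup.inclusion_injective hDH).comp ε.injective))
  exact ⟨r, hr.trans hm, fun j => ⟨D j, H.finiteIndex_comap _, r j, le_rfl, e j⟩⟩

end VirtuallyFreeAbelianOfRankLE

section algA

variable {G G' : Type*} [Group G] [Group G'] {i j : ℕ}

lemma mem_algA_iff {g : G} :
    g ∈ algA G i ↔ VirtuallyFreeAbelianOfRankLE (Subgroup.centralizer {g}) i :=
  Iff.rfl

lemma algA_mono (hij : i ≤ j) : algA G i ⊆ algA G j :=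
  fun _ => VirtuallyFreeAbelianOfRankLE.mono hij

lemma map_mem_algA (e : G ≃* G') {x : G} (hx : x ∈ algA G i) : e x ∈ algA G' i := by
  have hC : (Subgroup.centralizer {x}).map (e : G →* G') = Subgroup.centralizer {e x} := by
    ext y
    obtain ⟨y, rfl⟩ := e.surjective y
    simp [Subgroup.mem_centralizer_singleton_iff, ← map_mul]
  exact (mem_algA_iff.1 hx).of_mulEquiv ((e.subgroupMap _).trans (MulEquiv.subgroupCongr hC))

lemma coe_mem_algA {K : Subgroup G} [K.FiniteIndex] {x : K} (hx : x ∈ algA K i) :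
    (x : G) ∈ algA G i :=
  VirtuallyFreeAbelianOfRankLE.of_finiteIndex _
    ((mem_algA_iff.1 hx).of_mulEquiv (K.centralizerEquivSubgroupOf x))

end algA

section algr

variable {G G' : Type*} [Group G] [Group G'] {i : ℕ}

lemma algCovers_iff : algCovers G i ↔ ∃ F : Finset G, ∀ x, ∃ g ∈ F, g⁻¹ * x ∈ algA G i := by
  simp [algCovers, Set.eq_univ_iff_forall, Set.mem_smul_set_iff_inv_smul_mem]

lemma algr_le_iff : algr G ≤ i ↔ algCovers G i := by
  refine ⟨fun h => ?_, fun h => sInf_le ⟨i, rfl, h⟩⟩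
  have hne : {n : ℕ∞ | ∃ i : ℕ, n = i ∧ algCovers G i}.Nonempty := by
    by_contra hempty
    rw [Set.not_nonempty_iff_eq_empty] at hempty
    simp [algr, hempty] at h
  obtain ⟨j, hj, hcov⟩ := csInf_mem hne
  obtain ⟨F, hF⟩ := algCovers_iff.1 hcov
  refine algCovers_iff.2 ⟨F, fun x => ?_⟩
  obtain ⟨g, hg, hx⟩ := hF x
  have hji : (j : ℕ∞) ≤ i := hj ▸ h
  exact ⟨g, hg, algA_mono (by exact_mod_cast hji) hx⟩

lemma le_algr_of_forall {a : ℕ∞} (h : ∀ i : ℕ, algCovers G i → a ≤ i) : a ≤ algr G :=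
  le_sInf <| by rintro _ ⟨i, rfl, hi⟩; exact h i hi

lemma algr_le_sup_of_forall_exists {τ : Type*} (T : Finset τ) (g : τ → G) (w : τ → ℕ)
    (h : ∀ x, ∃ t ∈ T, (g t)⁻¹ * x ∈ algA G (w t)) : algr G ≤ T.sup w := by
  classical
  refine algr_le_iff.2 (algCovers_iff.2 ⟨T.image g, fun x => ?_⟩)
  obtain ⟨t, ht, hx⟩ := h x
  exact ⟨g t, Finset.mem_image_of_mem g ht, algA_mono (Finset.le_sup ht) hx⟩

lemma exists_forall_algr_le_of_inv_mul_mem {τ : Type*} (T : Finset τ) (g : τ → G)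
    (w : τ → ℕ) : ∃ y, ∀ t ∈ T, (g t)⁻¹ * y ∈ algA G (w t) → algr G ≤ w t := by
  by_contra! h
  set T' := T.filter fun t => (w t : ℕ∞) < algr G
  have hT' : ∀ y, ∃ t ∈ T', (g t)⁻¹ * y ∈ algA G (w t) := fun y => by
    obtain ⟨t, ht, hy, hlt⟩ := h y
    exact ⟨t, Finset.mem_filter.2 ⟨ht, hlt⟩, hy⟩
  obtain ⟨t₀, ht₀, -⟩ := hT' 1
  obtain ⟨t, ht, hsup⟩ := Finset.exists_mem_eq_sup T' ⟨t₀, ht₀⟩ w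
  have hle := algr_le_sup_of_forall_exists T' g w hT'
  rw [hsup] at hle
  exact (Finset.mem_filter.1 ht).2.not_ge hle

lemma algr_le_algr_of_mulEquiv (e : G ≃* G') : algr G' ≤ algr G := by
  classical
  refine le_algr_of_forall fun i hi => algr_le_iff.2 (algCovers_iff.2 ?_)
  obtain ⟨F, hF⟩ := algCovers_iff.1 hi
  refine ⟨F.image e, fun y => ?_⟩
  obtain ⟨g, hg, hx⟩ := hF (e.symm y)
  refine ⟨e g, Finset.mem_image_of_mem e hg, ?_⟩
  simpa using map_mem_algA e hx

lemma algr_congr (e : G ≃* G') : algr G = algr G' :=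
  (algr_le_algr_of_mulEquiv e.symm).antisymm (algr_le_algr_of_mulEquiv e)

lemma algr_le_algr_of_finiteIndex (K : Subgroup G) [K.FiniteIndex] : algr G ≤ algr K := by
  classical
  refine le_algr_of_forall fun i hi => algr_le_iff.2 (algCovers_iff.2 ?_)
  obtain ⟨F, hF⟩ := algCovers_iff.1 hi
  have : Fintype (G ⧸ K) := Fintype.ofFinite _
  -- `x = r * y` with `r` a coset representative and `y ∈ K` covered by `F`
  refine ⟨Finset.image₂ (fun (q : G ⧸ K) (t : K) => q.out * (t : G)) Finset.univ F, fun x => ?_⟩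
  set r : G := (x : G ⧸ K).out
  have hr : r⁻¹ * x ∈ K := QuotientGroup.eq.1 (QuotientGroup.out_eq' (x : G ⧸ K))
  obtain ⟨t, ht, hy⟩ := hF ⟨r⁻¹ * x, hr⟩
  refine ⟨r * t, Finset.mem_image₂_of_mem (Finset.mem_univ _) ht, ?_⟩
  convert coe_mem_algA hy using 1
  simp [mul_assoc]

lemma algr_le_algr_of_le {H K : Subgroup G} (hKH : K ≤ H) [K.FiniteIndex] : algr H ≤ algr K :=
  (algr_le_algr_of_finiteIndex (K.subgroupOf H)).trans_eq
    (algr_congr (Subgroup.subgroupOfEquivOfLe hKH))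

end algr

section pi

variable {ι : Type*} [DecidableEq ι] {G : ι → Type*} [∀ j, Group (G j)]

lemma exists_sum_algr_le_of_forall_exists {τ : Type*} (s : Finset ι) (T : Finset τ)
    (g : τ → ∀ j, G j) (w : τ → ι → ℕ)
    (hT : ∀ x : ∀ j, G j, ∃ t ∈ T, ∀ j ∈ s, (g t j)⁻¹ * x j ∈ algA (G j) (w t j)) :
    ∃ t ∈ T, ∑ j ∈ s, algr (G j) ≤ ∑ j ∈ s, (w t j : ℕ∞) := by
  induction s using Finset.induction_on generalizing T with
  | empty =>
    obtain ⟨t, ht, -⟩ := hT 1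
    exact ⟨t, ht, by simp⟩
  | insert j s hj ih =>
    -- pick `y ∈ G j` lying in no translate of level `< algr (G j)`, and cover the slice `x j = y`
    obtain ⟨y, hy⟩ := exists_forall_algr_le_of_inv_mul_mem T (fun t => g t j) (fun t => w t j)
    obtain ⟨t, ht, hsum⟩ := ih (T.filter fun t => algr (G j) ≤ w t j) fun x => by
      obtain ⟨t, ht, hx⟩ := hT (Function.update x j y)
      refine ⟨t, Finset.mem_filter.2 ⟨ht, hy t ht ?_⟩, fun i hi => ?_⟩
      · simpa using hx j (Finset.mem_insert_self j s)
      · simpa [Function.update_of_ne (ne_of_mem_of_not_mem hi hj)] using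
          hx i (Finset.mem_insert_of_mem hi)
    refine ⟨t, (Finset.mem_filter.1 ht).1, ?_⟩
    rw [Finset.sum_insert hj, Finset.sum_insert hj]
    exact add_le_add (Finset.mem_filter.1 ht).2 hsum

variable [Fintype ι]

lemma mem_algA_pi_iff {x : ∀ j, G j} {k : ℕ} :
    x ∈ algA (∀ j, G j) k ↔ ∃ c : ι → ℕ, ∑ j, c j ≤ k ∧ ∀ j, x j ∈ algA (G j) (c j) := by
  let e := (MulEquiv.subgroupCongr (Subgroup.centralizer_singleton_pi x)).trans
    (Subgroup.piEquivPi fun j => Subgroup.centralizer {x j})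
  constructor
  · exact fun hx => ((mem_algA_iff.1 hx).of_mulEquiv e).exists_of_pi
  · rintro ⟨c, hc, hx⟩
    exact ((VirtuallyFreeAbelianOfRankLE.pi hx).of_mulEquiv e.symm).mono hc

lemma le_algr_pi : ∑ j, algr (G j) ≤ algr (∀ j, G j) := by
  refine le_algr_of_forall fun k hk => ?_
  obtain ⟨F, hF⟩ := algCovers_iff.1 hk
  let T := (F ×ˢ Fintype.piFinset fun (_ : ι) => Finset.range (k + 1)).filter
    fun t => ∑ j, t.2 j ≤ k
  obtain ⟨t, ht, hle⟩ := exists_sum_algr_le_of_forall_exists Finset.univ T Prod.fst Prod.snd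
    fun x => by
      obtain ⟨g, hg, hx⟩ := hF x
      obtain ⟨c, hc, hcx⟩ := mem_algA_pi_iff.1 hx
      refine ⟨(g, c), Finset.mem_filter.2 ⟨Finset.mem_product.2 ⟨hg, ?_⟩, hc⟩,
        fun j _ => hcx j⟩
      exact Fintype.mem_piFinset.2 fun j => Finset.mem_range_succ_iff.2
        ((Finset.single_le_sum (fun _ _ => Nat.zero_le _) (Finset.mem_univ j)).trans hc)
  calc ∑ j, algr (G j) ≤ ∑ j, (t.2 j : ℕ∞) := hle
    _ ≤ k := by exact_mod_cast (Finset.mem_filter.1 ht).2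

lemma algr_pi_le : algr (∀ j, G j) ≤ ∑ j, algr (G j) := by
  by_cases htop : ∃ j, algr (G j) = ⊤
  · obtain ⟨j, hj⟩ := htop
    exact le_top.trans_eq (ENat.sum_eq_top.2 ⟨j, Finset.mem_univ j, hj⟩).symm
  push Not at htop
  have hcov j : ∃ F : Finset (G j), ∀ x, ∃ g ∈ F, g⁻¹ * x ∈ algA (G j) (algr (G j)).toNat :=
    algCovers_iff.1 (algr_le_iff.1 (ENat.natCast_toNat (htop j)).ge)
  choose F hF using hcov
  calc algr (∀ j, G j) ≤ ((∑ j, (algr (G j)).toNat : ℕ) : ℕ∞) := by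
        refine algr_le_iff.2 (algCovers_iff.2 ⟨Fintype.piFinset F, fun x => ?_⟩)
        choose g hg hx using fun j => hF j (x j)
        exact ⟨g, Fintype.mem_piFinset.2 hg, mem_algA_pi_iff.2 ⟨_, le_rfl, hx⟩⟩
    _ = ∑ j, algr (G j) := by
        push_cast
        exact Finset.sum_congr rfl fun j _ => ENat.natCast_toNat (htop j)

lemma algr_pi : algr (∀ j, G j) = ∑ j, algr (G j) :=
  algr_pi_le.antisymm le_algr_pi

end pi

lemma ENat.sum_iSup_eq_iSup_pi {ι : Type*} {κ : ι → Type*} [∀ i, Nonempty (κ i)] (s : Finset ι)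
    (f : ∀ i, κ i → ℕ∞) : ∑ i ∈ s, ⨆ k, f i k = ⨆ g : ∀ i, κ i, ∑ i ∈ s, f i (g i) := by
  calc ∑ i ∈ s, ⨆ k, f i k = ∑ i ∈ s, ⨆ g : ∀ i, κ i, f i (g i) :=
        Finset.sum_congr rfl fun i _ => ((Function.surjective_eval i).iSup_comp (f i)).symm
    _ = ⨆ g : ∀ i, κ i, ∑ i ∈ s, f i (g i) := ENat.sum_iSup fun g g' =>
        ⟨fun i => if f i (g i) ≤ f i (g' i) then g' i else g i, fun i => by
          dsimp only
          split_ifs with h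
          · exact ⟨h, le_rfl⟩
          · exact ⟨le_rfl, (not_le.1 h).le⟩⟩

lemma algRank_eq_iSup_subtype (G : Type*) [Group G] :
    algRank G = ⨆ K : {K : Subgroup G // K.FiniteIndex}, algr K.1 := by
  rw [algRank, iSup_subtype']

lemma algRank_pi {ι : Type*} [Fintype ι] [DecidableEq ι] (G : ι → Type*) [∀ j, Group (G j)] :
    algRank (∀ j, G j) = ∑ j, algRank (G j) := by
  have : ∀ j, Nonempty {K : Subgroup (G j) // K.FiniteIndex} := fun _ => ⟨⟨⊤, inferInstance⟩⟩
  simp_rw [algRank_eq_iSup_subtype, ENat.sum_iSup_eq_iSup_pi]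
  refine le_antisymm (iSup_le fun ⟨H, hH⟩ => ?_) (iSup_le fun K => ?_)
  · -- `H` contains the finite-index product of the subgroups `H ∩ G j`
    let K j : {K : Subgroup (G j) // K.FiniteIndex} :=
      ⟨H.comap (MonoidHom.mulSingle G j), H.finiteIndex_comap _⟩
    have hKH : Subgroup.pi Set.univ (fun j => (K j).1) ≤ H :=
      Subgroup.pi_le_iff.2 fun j => Subgroup.map_comap_le _ _
    have : ∀ j, (K j).1.FiniteIndex := fun j => (K j).2
    refine le_iSup_of_le K ?_
    calc algr H ≤ algr (Subgroup.pi Set.univ fun j => (K j).1) := algr_le_algr_of_le hKH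
      _ = ∑ j, algr (K j).1 := (algr_congr (Subgroup.piEquivPi _)).trans algr_pi
  · have : ∀ j, (K j).1.FiniteIndex := fun j => (K j).2
    refine le_iSup_of_le ⟨Subgroup.pi Set.univ fun j => (K j).1, inferInstance⟩ ?_
    exact (algr_pi.symm.trans (algr_congr (Subgroup.piEquivPi _)).symm).le

/-- For a finite direct product `G = G₁ × ⋯ × Gₙ`,
`r(G) = r(G₁) + ⋯ + r(Gₙ)` and `rank(G) = rank(G₁) + ⋯ + rank(Gₙ)`
(in `ℕ∞`, so that a sum involving `∞` equals `∞`). -/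
theorem stmt_1 (n : ℕ) (G : Fin n → Type*) [∀ i, Group (G i)] :
    algr (∀ i, G i) = ∑ i, algr (G i) ∧ algRank (∀ i, G i) = ∑ i, algRank (G i) :=
  ⟨algr_pi, algRank_pi G⟩
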